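/- Fix n ≥ 1 and a finite set F of ordered pairs (i,j) with i ≠ j that is symmetric, i.e., (i,j) ∈ F if and only if (j,i) ∈ F. Under the hypotheses of the first-order perturbation formula — namely, A(ε) = A₀ + ε·Σ_{(i,j)∈F} E_ij with A₀ a real n×n matrix with zero diagonal, L(ε) = D(ε) − A(ε) the Laplacian, and differentiable branches ξ(ε), y(ε), κ(ε) with ξ(ε)ᵀL(ε) = 0, 𝟏ᵀξ(ε) = 1, ((Ξ(ε)L(ε) + L(ε)ᵀΞ(ε))/2)·y(ε) = κ(ε)·Ξ(ε)·y(ε), y(ε)ᵀΞ(ε)y(ε) = 1 — suppose additionally that ξ(ε) = (1/n)·𝟏 for all ε in a neighborhood of 0. Then the derivative of κ at 0 satisfies κ′(0) = Σ_{{i,j} : (i,j)∈F} (1/n)·(y_i(0) − y_j(0))², where the sum ranges over unordered pairs {i,j} with (i,j) ∈ F, and in particular κ′(0) ≥ 0. -/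

import Mathlib

open Matrix Filter

/-! With uniform weights `ξ = 𝟏/n` the eigenproblem becomes the symmetric one `S(ε) y = κ y`,
where `S(ε) = (L(ε) + L(ε)ᵀ)/2 = S₀ + ε S₁` and `‖y‖² = n`. The Hellmann–Feynman argument then
gives `n κ'(0) = yᵀ S₁ y = yᵀ L₁ y`, with `L₁` the Laplacian of the perturbation pattern `F`.
For a symmetric `F` this quadratic form is `½ Σ_{(i,j) ∈ F} (y_i - y_j)²`, and every unordered
pair `{i, j}` is counted by exactly two ordered pairs of `F`. -/

namespace Matrix

section Laplacian

variable {ι R : Type*} [Fintype ι] [DecidableEq ι]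

def laplacian [Ring R] (A : Matrix ι ι R) : Matrix ι ι R :=
  diagonal (fun i => ∑ j, A i j) - A

theorem laplacian_add [Ring R] (A B : Matrix ι ι R) :
    laplacian (A + B) = laplacian A + laplacian B := by
  simp only [laplacian, add_apply, Finset.sum_add_distrib, ← diagonal_add]
  abel

theorem laplacian_smul [CommRing R] (c : R) (A : Matrix ι ι R) :
    laplacian (c • A) = c • laplacian A := by
  rw [laplacian, laplacian, smul_sub, ← diagonal_smul]
  congr 2
  ext i
  simp [Finset.mul_sum]

theorem laplacian_mulVec_apply [Ring R] (A : Matrix ι ι R) (x : ι → R) (i : ι) :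
    (laplacian A *ᵥ x) i = ∑ j, A i j * (x i - x j) := by
  rw [laplacian, sub_mulVec, Pi.sub_apply, mulVec_diagonal]
  simp only [mulVec, dotProduct, mul_sub, Finset.sum_sub_distrib, Finset.sum_mul]

theorem dotProduct_laplacian_mulVec [CommRing R] (A : Matrix ι ι R) (x : ι → R) :
    x ⬝ᵥ (laplacian A *ᵥ x) = ∑ i, ∑ j, A i j * (x i * (x i - x j)) := by
  simp only [dotProduct, laplacian_mulVec_apply, Finset.mul_sum]
  exact Finset.sum_congr rfl fun i _ => Finset.sum_congr rfl fun j _ => by ring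

end Laplacian

theorem sum_sum_sum_single_mul {ι R : Type*} [Fintype ι] [DecidableEq ι] [Semiring R]
    (F : Finset (ι × ι)) (g : ι → ι → R) :
    ∑ i, ∑ j, (∑ p ∈ F, single p.1 p.2 (1 : R)) i j * g i j = ∑ p ∈ F, g p.1 p.2 := by
  simp only [sum_apply, single_apply, Finset.sum_mul, ite_mul, one_mul, zero_mul]
  rw [Finset.sum_congr rfl fun i _ => Finset.sum_comm, Finset.sum_comm]
  refine Finset.sum_congr rfl fun p _ => ?_
  simp [ite_and]

theorem dotProduct_half_add_transpose_mulVec {ι K : Type*} [Fintype ι] [Field K] [CharZero K]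
    (M : Matrix ι ι K) (x : ι → K) :
    x ⬝ᵥ (((1 / 2 : K) • (M + Mᵀ)) *ᵥ x) = x ⬝ᵥ (M *ᵥ x) := by
  rw [smul_mulVec, add_mulVec, dotProduct_smul, dotProduct_add, dotProduct_transpose_mulVec,
    smul_eq_mul]
  ring

theorem weighted_eigen_iff_of_uniform_weight {ι K : Type*} [Fintype ι] [DecidableEq ι] [Field K]
    {c : K} (hc : c ≠ 0) (M : Matrix ι ι K) (x : ι → K) (κ : K) :
    ((1 / 2 : K) • (diagonal (fun _ => c) * M + Mᵀ * diagonal (fun _ => c))) *ᵥ x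
        = κ • (diagonal (fun _ => c) *ᵥ x) ↔
      ((1 / 2 : K) • (M + Mᵀ)) *ᵥ x = κ • x := by
  rw [← smul_one_eq_diagonal, smul_mul_assoc, one_mul, mul_smul_comm, mul_one, ← smul_add,
    smul_comm]
  simp only [smul_mulVec, one_mulVec]
  rw [smul_comm κ]
  exact (smul_right_injective _ hc).eq_iff

end Matrix

section Derivative

variable {𝕜 ι : Type*} [NontriviallyNormedField 𝕜] [Fintype ι] {u v : 𝕜 → ι → 𝕜} {u' v' : ι → 𝕜}
  {t : 𝕜}

theorem HasDerivAt.dotProduct (hu : HasDerivAt u u' t) (hv : HasDerivAt v v' t) :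
    HasDerivAt (fun s => u s ⬝ᵥ v s) (u' ⬝ᵥ v t + u t ⬝ᵥ v') t := by
  rw [hasDerivAt_pi] at hu hv
  exact (HasDerivAt.fun_sum (u := Finset.univ) fun i _ => (hu i).fun_mul (hv i)).congr_deriv
    Finset.sum_add_distrib

theorem HasDerivAt.affine_mulVec (S₀ S₁ : Matrix ι ι 𝕜) (hv : HasDerivAt v v' t) :
    HasDerivAt (fun s => (S₀ + s • S₁) *ᵥ v s) ((S₀ + t • S₁) *ᵥ v' + S₁ *ᵥ v t) t := by
  have hlin (M : Matrix ι ι 𝕜) : HasDerivAt (fun s => M *ᵥ v s) (M *ᵥ v') t :=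
    hasDerivAt_pi.2 fun i =>
      HasDerivAt.fun_sum fun j _ => ((hasDerivAt_pi.1 hv) j).const_mul (M i j)
  simp only [add_mulVec, smul_mulVec]
  exact ((hlin S₀).fun_add ((hasDerivAt_id' t).fun_smul (hlin S₁))).congr_deriv
    (by rw [one_smul, add_assoc])

end Derivative

/-- Differentiate the Rayleigh identity `c κ(ε) = y(ε)ᵀ (S₀ + ε S₁) y(ε)`: the terms containing
`y'` cancel because `S₀ y(0) = κ(0) y(0)` and `y' ⊥ y(0)`. -/
theorem hellmann_feynman {ι : Type*} [Fintype ι] {S₀ S₁ : Matrix ι ι ℝ} (hS₀ : S₀.IsSymm)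
    {y : ℝ → ι → ℝ} {y' : ι → ℝ} {κ : ℝ → ℝ} {κ' c : ℝ}
    (hy : HasDerivAt y y' 0) (hκ : HasDerivAt κ κ' 0)
    (heig : ∀ᶠ ε in nhds 0, (S₀ + ε • S₁) *ᵥ y ε = κ ε • y ε)
    (hnorm : ∀ᶠ ε in nhds 0, y ε ⬝ᵥ y ε = c) :
    c * κ' = y 0 ⬝ᵥ (S₁ *ᵥ y 0) := by
  have hS₀y : S₀ *ᵥ y 0 = κ 0 • y 0 := by simpa using heig.self_of_nhds
  have horth : y' ⬝ᵥ y 0 = 0 := by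
    have h := (hy.dotProduct hy).unique
      ((hasDerivAt_const 0 c).congr_of_eventuallyEq hnorm)
    rw [dotProduct_comm (y 0)] at h
    linarith
  have hrayleigh : (fun ε => y ε ⬝ᵥ ((S₀ + ε • S₁) *ᵥ y ε)) =ᶠ[nhds 0] fun ε => c * κ ε := by
    filter_upwards [heig, hnorm] with ε he hn
    rw [he, dotProduct_smul, hn, smul_eq_mul, mul_comm]
  have h := (hy.dotProduct (hy.affine_mulVec S₀ S₁)).unique
    ((hκ.const_mul c).congr_of_eventuallyEq hrayleigh)
  have hsym : y 0 ⬝ᵥ (S₀ *ᵥ y') = y' ⬝ᵥ (S₀ *ᵥ y 0) := by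
    simpa [hS₀.eq] using dotProduct_transpose_mulVec S₀ (y 0) y'
  rw [zero_smul, add_zero, dotProduct_add, hsym, hS₀y, dotProduct_smul, horth] at h
  simpa using h.symm

section SymmetricPairs

variable {α : Type*} {F : Finset (α × α)}

theorem Finset.sum_swap_of_swap_mem {M : Type*} [AddCommMonoid M] (hF : ∀ p ∈ F, p.swap ∈ F)
    (g : α × α → M) : ∑ p ∈ F, g p.swap = ∑ p ∈ F, g p :=
  Finset.sum_nbij' Prod.swap Prod.swap hF hF (fun _ _ => rfl) (fun _ _ => rfl) (fun _ _ => rfl)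

theorem two_mul_sum_mul_sub_eq_sum_sq {R : Type*} [CommRing R] (hF : ∀ p ∈ F, p.swap ∈ F)
    (x : α → R) :
    2 * ∑ p ∈ F, x p.1 * (x p.1 - x p.2) = ∑ p ∈ F, (x p.1 - x p.2) ^ 2 := by
  rw [two_mul]
  nth_rw 2 [← Finset.sum_swap_of_swap_mem hF]
  rw [← Finset.sum_add_distrib]
  exact Finset.sum_congr rfl fun p _ => by simp only [Prod.fst_swap, Prod.snd_swap]; ring

theorem sum_eq_two_nsmul_sum_image_sym2 [DecidableEq α] {M : Type*} [AddCommMonoid M]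
    (hirr : ∀ p ∈ F, p.1 ≠ p.2) (hF : ∀ p ∈ F, p.swap ∈ F)
    (f : {f : α → α → M // ∀ a b, f a b = f b a}) :
    ∑ p ∈ F, f.1 p.1 p.2 = 2 • ∑ e ∈ F.image (fun p => Sym2.mk p.1 p.2), Sym2.lift f e := by
  rw [Finset.smul_sum]
  change ∑ p ∈ F, Sym2.lift f (Sym2.mk p.1 p.2) = _
  rw [Finset.sum_comp]
  refine Finset.sum_congr rfl fun e he => ?_
  obtain ⟨p, hp, rfl⟩ := Finset.mem_image.mp he
  have hfiber : {q ∈ F | Sym2.mk q.1 q.2 = Sym2.mk p.1 p.2} = {p, p.swap} := by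
    ext q
    simp only [Finset.mem_filter, Finset.mem_insert, Finset.mem_singleton, Sym2.mk_eq_mk_iff]
    constructor
    · exact And.right
    · rintro (rfl | rfl)
      exacts [⟨hp, .inl rfl⟩, ⟨hF p hp, .inr rfl⟩]
  have hne : p ≠ p.swap := fun h => hirr p hp (congrArg Prod.fst h)
  rw [hfiber, Finset.card_pair hne]

end SymmetricPairs

/-- Recovering the classical undirected monotonicity law: under a symmetric
edge-weight perturbation with uniform stationary distribution ξ(ε) = (1/n)·𝟏,
κ′(0) = Σ_{unordered pairs {i,j} with (i,j)∈F} (1/n)·(y_i − y_j)² ≥ 0. -/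
theorem stmt12 (n : ℕ) (hn : 1 ≤ n)
    (A₀ : Matrix (Fin n) (Fin n) ℝ)
    (F : Finset (Fin n × Fin n)) (hF : ∀ p ∈ F, p.1 ≠ p.2)
    (hFsymm : ∀ p : Fin n × Fin n, p ∈ F ↔ (p.2, p.1) ∈ F)
    (A : ℝ → Matrix (Fin n) (Fin n) ℝ)
    (hA : ∀ ε, A ε = A₀ + ε • ∑ p ∈ F, Matrix.single p.1 p.2 (1 : ℝ))
    (L : ℝ → Matrix (Fin n) (Fin n) ℝ)
    (hL : ∀ ε, L ε = Matrix.diagonal (fun i => ∑ j, A ε i j) - A ε)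
    (ξ y : ℝ → Fin n → ℝ) (y' : Fin n → ℝ) (κ : ℝ → ℝ) (κ' : ℝ)
    (hyd : ∀ i, HasDerivAt (fun ε => y ε i) (y' i) 0)
    (hκd : HasDerivAt κ κ' 0)
    (heig : ∀ᶠ ε in nhds (0 : ℝ),
      (((1 : ℝ)/2) • (Matrix.diagonal (ξ ε) * L ε + (L ε)ᵀ * Matrix.diagonal (ξ ε))) *ᵥ y ε
        = κ ε • (Matrix.diagonal (ξ ε) *ᵥ y ε))
    (hnorm2 : ∀ᶠ ε in nhds (0 : ℝ), y ε ⬝ᵥ (Matrix.diagonal (ξ ε) *ᵥ y ε) = 1)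
    (hξuniform : ∀ᶠ ε in nhds (0 : ℝ), ξ ε = fun _ => 1 / (n : ℝ)) :
    κ' = (∑ e ∈ F.image (fun p => Sym2.mk p.1 p.2),
            Sym2.lift ⟨fun i j => (1 / (n : ℝ)) * (y 0 i - y 0 j) ^ 2,
              fun a b => by ring⟩ e)
      ∧ 0 ≤ κ' := by
  have hn' : (0 : ℝ) < n := by positivity
  set P := ∑ p ∈ F, single p.1 p.2 (1 : ℝ)
  set S₀ := (1 / 2 : ℝ) • (laplacian A₀ + (laplacian A₀)ᵀ)
  set S₁ := (1 / 2 : ℝ) • (laplacian P + (laplacian P)ᵀ)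
  have hsymm_part : ∀ ε, (1 / 2 : ℝ) • (L ε + (L ε)ᵀ) = S₀ + ε • S₁ := fun ε => by
    rw [hL, ← laplacian, hA, laplacian_add, laplacian_smul, transpose_add, transpose_smul]
    module
  have heig_symm : ∀ᶠ ε in nhds 0, (S₀ + ε • S₁) *ᵥ y ε = κ ε • y ε := by
    filter_upwards [heig, hξuniform] with ε he hξ
    rwa [hξ, weighted_eigen_iff_of_uniform_weight (one_div_pos.2 hn').ne', hsymm_part] at he
  have hnorm : ∀ᶠ ε in nhds 0, y ε ⬝ᵥ y ε = n := by
    filter_upwards [hnorm2, hξuniform] with ε h hξ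
    rw [hξ, ← smul_one_eq_diagonal, smul_mulVec, one_mulVec, dotProduct_smul, smul_eq_mul] at h
    field_simp at h
    exact h
  have hHF := hellmann_feynman ((isSymm_add_transpose_self _).smul _) (hasDerivAt_pi.2 hyd) hκd
    heig_symm hnorm
  rw [dotProduct_half_add_transpose_mulVec, dotProduct_laplacian_mulVec,
    sum_sum_sum_single_mul] at hHF
  have hF' : ∀ p ∈ F, p.swap ∈ F := fun p hp => (hFsymm p).1 hp
  have hsq := two_mul_sum_mul_sub_eq_sum_sq hF' (y 0)
  have hedges := sum_eq_two_nsmul_sum_image_sym2 hF hF'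
    ⟨fun i j => (1 / (n : ℝ)) * (y 0 i - y 0 j) ^ 2, fun a b => by ring⟩
  rw [← Finset.mul_sum, two_nsmul] at hedges
  have hκ' : κ' = ∑ p ∈ F, (y 0 p.1 - y 0 p.2) ^ 2 / (2 * n) := by
    rw [← Finset.sum_div, ← hsq, ← hHF]
    field_simp
  refine ⟨?_, hκ' ▸ Finset.sum_nonneg fun _ _ => by positivity⟩
  rw [hκ', ← Finset.sum_div]
  linear_combination hedges / 2
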